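/- As formal power series in q, the theta function of triangular numbers ψ(q) = ∑_{m ≥ 0} q^{m(m+1)/2} satisfies ψ(q) = ∏_{n ≥ 1} (1 − q^n)^{−f'_n}, where f'_n = 1 if n is odd and f'_n = −1 if n is even; equivalently ψ(q) = ∏_{n ≥ 1} (1 − q^{2n})/(1 − q^{2n−1}). -/

import Mathlib

open PowerSeries

noncomputable instance : TopologicalSpace ℚ⟦X⟧ :=
  inferInstanceAs (TopologicalSpace ((Unit →₀ ℕ) → ℚ))

/-- `ψ(q) = ∑_{m ≥ 0} q^{m(m+1)/2}`: the coefficient of `q^k` is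
`#{m ∈ ℕ : m(m+1)/2 = k}`. -/
noncomputable def psi : ℚ⟦X⟧ :=
  PowerSeries.mk fun k => (Nat.card {m : ℕ // m * (m + 1) / 2 = k} : ℚ)

/-- `(1 − q^n)^{−f'_n}` where `f'_n = 1` for odd `n` and `f'_n = −1` for even `n`;
the negative exponent is interpreted via the formal inverse. -/
noncomputable def psiFactor (n : ℕ) : ℚ⟦X⟧ :=
  if n % 2 = 1 then (1 - (X : ℚ⟦X⟧) ^ n)⁻¹ else 1 - (X : ℚ⟦X⟧) ^ n

namespace GaussAux

/-- triangular numbers -/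
def tri : ℕ → ℕ
  | 0 => 0
  | j + 1 => tri j + (j + 1)

lemma two_tri (m : ℕ) : 2 * tri m = m * (m + 1) := by
  induction m with
  | zero => rfl
  | succ j ih => simp only [tri]; ring_nf; ring_nf at ih; omega

lemma tri_eq (m : ℕ) : m * (m + 1) / 2 = tri m := by
  have := two_tri m; omega

lemma tri_succ (j : ℕ) : tri (j + 1) = tri j + (j + 1) := rfl

lemma le_tri (j : ℕ) : j ≤ tri j := by
  induction j with
  | zero => simp [tri]
  | succ i ih => rw [tri_succ]; omega

lemma tri_strictMono : StrictMono tri := by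
  apply strictMono_nat_of_lt_succ
  intro n; rw [tri_succ]; omega

/-- `t n m = T_{m-n}` as a natural number, where `T_j = j(j+1)/2` for `j : ℤ`,
using `T_{-i} = T_{i-1}`. -/
def t (n m : ℕ) : ℕ := if n ≤ m then tri (m - n) else tri (n - m - 1)

lemma t_le (n m : ℕ) (h : n ≤ m) : t n m = tri (m - n) := if_pos h

lemma t_gt (n m : ℕ) (h : m < n) : t n m = tri (n - m - 1) := if_neg (by omega)

lemma t_exp1 (n m : ℕ) (hm : m ≤ 2 * n) :
    t (n + 1) (m + 1) + (2 * n + 1 - m) = t (n + 1) m + (n + 1) := by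
  rcases lt_trichotomy m n with h | h | h
  · rw [t_gt _ _ (by omega), t_gt _ _ (by omega)]
    obtain ⟨i, hi⟩ : ∃ i, n - m = i + 1 := ⟨n - m - 1, by omega⟩
    have h1 : n + 1 - (m + 1) - 1 = i := by omega
    have h2 : n + 1 - m - 1 = i + 1 := by omega
    rw [h1, h2, tri_succ]; omega
  · subst h
    rw [t_le _ _ (by omega), t_gt _ _ (by omega)]
    simp [tri]; omega
  · rw [t_le _ _ (by omega), t_le _ _ (by omega)]
    obtain ⟨j, hj⟩ : ∃ j, m - (n+1) = j := ⟨m - (n+1), rfl⟩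
    have h1 : m + 1 - (n + 1) = j + 1 := by omega
    rw [h1, hj, tri_succ]; omega

lemma t_exp2 (n m : ℕ) (hm : m ≤ 2 * n) :
    t (n + 1) (m + 1) + (2 * n - m) = t (n + 1) m + n := by
  have := t_exp1 n m hm; omega

lemma t_exp3 (n m : ℕ) (hm : m ≤ 2 * n) :
    t (n + 1) (m + 2) + ((2 * n - m) + (2 * n - m)) = t (n + 1) m + (2 * n + 1) := by
  rcases le_or_gt (m+1) (2*n) with h | h
  · have h1 := t_exp1 n (m+1) h
    rw [show m+1+1 = m+2 from rfl] at h1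
    have h2 := t_exp1 n m hm
    omega
  · have hm2 : m = 2*n := by omega
    subst hm2
    rcases Nat.eq_zero_or_pos n with h0 | h0
    · subst h0; simp only [show (2:ℕ)*0 = 0 from rfl, Nat.zero_add, Nat.add_zero]
      rw [t_le _ _ (by omega), t_gt _ _ (by omega)]
      simp [tri]
    · rw [t_le _ _ (by omega), t_le _ _ (by omega)]
      have h1 : 2*n + 2 - (n+1) = n + 1 := by omega
      have h2 : 2*n - (n+1) = n - 1 := by omega
      rw [h1, h2]
      obtain ⟨i, rfl⟩ : ∃ i, n = i + 1 := ⟨n - 1, by omega⟩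
      have e1 := tri_succ (i+1)
      rw [show i+1+1 = i+2 from rfl] at e1
      have e2 := tri_succ i
      have h3 : i + 1 - 1 = i := by omega
      rw [h3, show i+1+1 = i+2 from rfl]
      omega

lemma t_reflect (n m : ℕ) (hm : m ≤ 2 * n) : t (n + 1) (2 * n - m) = t n m := by
  rcases le_or_gt n m with h | h
  · rw [t_gt _ _ (by omega), t_le _ _ h]
    congr 1; omega
  · rw [t_le _ _ (by omega), t_gt _ _ h]
    congr 1; omega


lemma tri_zero : tri 0 = 0 := rfl

lemma t_zero_zero : t 0 0 = 0 := by rw [t_le 0 0 le_rfl]; rfl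

noncomputable def qp (n : ℕ) : ℚ⟦X⟧ := ∏ i ∈ Finset.range n, (1 - X ^ (i + 1))

lemma qp_succ (n : ℕ) : qp (n + 1) = qp n * (1 - X ^ (n + 1)) :=
  Finset.prod_range_succ _ _

lemma cc_one_sub_X_pow (j : ℕ) : constantCoeff (1 - X ^ (j + 1) : ℚ⟦X⟧) = 1 := by
  simp [zero_pow]

lemma cc_qp (n : ℕ) : constantCoeff (qp n) = 1 := by
  rw [qp, map_prod]
  simp [cc_one_sub_X_pow]

lemma qp_mul_inv (n : ℕ) : qp n * (qp n)⁻¹ = 1 :=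
  PowerSeries.mul_inv_cancel _ (by rw [cc_qp]; exact one_ne_zero)

lemma isUnit_qp (n : ℕ) : IsUnit (qp n) := IsUnit.of_mul_eq_one _ (qp_mul_inv n)

/-- Gaussian binomial coefficients as power series, via the Pascal recursion. -/
noncomputable def binq : ℕ → ℕ → ℚ⟦X⟧
  | _, 0 => 1
  | 0, _ + 1 => 0
  | N + 1, m + 1 => binq N (m + 1) + X ^ (N - m) * binq N m

lemma binq_zero (N : ℕ) : binq N 0 = 1 := by cases N <;> rfl

lemma binq_succ_succ (N m : ℕ) :
    binq (N + 1) (m + 1) = binq N (m + 1) + X ^ (N - m) * binq N m := rfl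

lemma binq_gt : ∀ N m : ℕ, N < m → binq N m = 0 := by
  intro N
  induction N with
  | zero => intro m h; obtain ⟨m', rfl⟩ : ∃ m', m = m' + 1 := ⟨m - 1, by omega⟩; rfl
  | succ N ih =>
    intro m h
    obtain ⟨m', rfl⟩ : ∃ m', m = m' + 1 := ⟨m - 1, by omega⟩
    rw [binq_succ_succ, ih (m' + 1) (by omega), ih m' (by omega)]
    ring

/-- the "cleared" product formula for `binq`. -/
lemma binq_mul (N : ℕ) : ∀ m r : ℕ, m + r = N → binq N m * (qp m * qp r) = qp N := by
  induction N with
  | zero =>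
    intro m r h
    obtain ⟨rfl, rfl⟩ : m = 0 ∧ r = 0 := by omega
    simp [binq_zero, qp]
  | succ N ih =>
    intro m r h
    cases m with
    | zero =>
      obtain rfl : r = N + 1 := by omega
      simp [binq_zero, qp]
    | succ m' =>
      rw [binq_succ_succ]
      have hNm : N - m' = r := by omega
      rw [hNm]
      cases r with
      | zero =>
        have hm : m' = N := by omega
        subst hm
        have h1 := binq_gt m' (m' + 1) (by omega)
        have h2 := ih m' 0 (by omega)
        simp only [qp, Finset.range_zero, Finset.prod_empty, mul_one] at h2 ⊢
        rw [h1, Finset.prod_range_succ]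
        linear_combination (1 - X ^ (m' + 1)) * h2
      | succ r' =>
        have ih1 := ih (m' + 1) r' (by omega)
        have ih2 := ih m' (r' + 1) (by omega)
        obtain rfl : N = m' + r' + 1 := by omega
        rw [qp_succ (m' + r' + 1), qp_succ m', qp_succ r'] at *
        have hx : (X : ℚ⟦X⟧) ^ (m' + r' + 1 + 1) = X ^ (m' + 1) * X ^ (r' + 1) := by
          rw [← pow_add]; congr 1; omega
        rw [hx]
        linear_combination (1 - X ^ (r' + 1)) * ih1 + X ^ (r' + 1) * (1 - X ^ (m' + 1)) * ih2

lemma binq_symm {N m r : ℕ} (h : m + r = N) : binq N m = binq N r := by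
  have h1 := binq_mul N m r h
  have h2 := binq_mul N r m (by omega)
  apply (isUnit_qp m).mul (isUnit_qp r) |>.mul_right_cancel
  rw [h1, mul_comm (qp m), h2]


lemma qp_def (n : ℕ) : qp n = ∏ i ∈ Finset.range n, (1 - X ^ (i + 1)) := rfl

lemma qp_zero : qp 0 = 1 := by simp [qp]

noncomputable def G (n : ℕ) : ℚ⟦X⟧ := ∑ m ∈ Finset.range (2*n+1), X ^ (t n m) * binq (2*n) m

lemma stepA (N : ℕ) (c : ℕ → ℚ⟦X⟧) :
    ∑ m ∈ Finset.range (N+2), c m * binq (N+1) m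
      = ∑ m ∈ Finset.range (N+1), (c m + c (m+1) * X^(N-m)) * binq N m := by
  have e0 : ∑ m ∈ Finset.range (N+2), c m * binq N m
      = ∑ m ∈ Finset.range (N+1), c m * binq N m := by
    rw [Finset.sum_range_succ, binq_gt N (N+1) (by omega), mul_zero, add_zero]
  have e1 : ∑ m ∈ Finset.range (N+1), c (m+1) * binq N (m+1)
      = ∑ m ∈ Finset.range (N+1), c m * binq N m - c 0 := by
    have h := Finset.sum_range_succ' (fun m => c m * binq N m) (N+1)
    rw [binq_zero, mul_one] at h
    linear_combination e0 - h
  have e2 : ∑ m ∈ Finset.range (N+1), c (m+1) * (X^(N-m) * binq N m)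
      = ∑ m ∈ Finset.range (N+1), c (m+1) * X^(N-m) * binq N m :=
    Finset.sum_congr rfl (fun m _ => by ring)
  have e3 : ∑ m ∈ Finset.range (N+1), (c m + c (m+1) * X^(N-m)) * binq N m
      = ∑ m ∈ Finset.range (N+1), c m * binq N m
        + ∑ m ∈ Finset.range (N+1), c (m+1) * X^(N-m) * binq N m := by
    rw [← Finset.sum_add_distrib]
    exact Finset.sum_congr rfl (fun m _ => by ring)
  rw [Finset.sum_range_succ']
  simp only [binq_succ_succ, binq_zero, mul_one, mul_add]
  rw [Finset.sum_add_distrib, e1, e2, e3]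
  ring

lemma G_succ (n : ℕ) : G (n+1) = (1 + X^n) * (1 + X^(n+1)) * G n := by
  have h1 : G (n+1) = ∑ m ∈ Finset.range (2*n+1+2), X ^ (t (n+1) m) * binq (2*n+1+1) m := by
    unfold G
    rw [show 2*(n+1)+1 = 2*n+1+2 from by omega, show 2*(n+1) = 2*n+1+1 from by omega]
  rw [h1, stepA (2*n+1) (fun m => X ^ (t (n+1) m)),
    stepA (2*n) (fun m => X ^ (t (n+1) m) + X ^ (t (n+1) (m+1)) * X^(2*n+1-m))]
  have h2 : ∀ m ∈ Finset.range (2*n+1),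
      ((X ^ (t (n+1) m) + X ^ (t (n+1) (m+1)) * X^(2*n+1-m))
        + (X ^ (t (n+1) (m+1)) + X ^ (t (n+1) (m+1+1)) * X^(2*n+1-(m+1))) * X^(2*n-m))
        * binq (2*n) m
      = ((1 + X^n) * (1 + X^(n+1))) * (X ^ (t (n+1) m) * binq (2*n) m) := by
    intro m hm
    rw [Finset.mem_range] at hm
    have hm' : m ≤ 2*n := by omega
    have hb : (X : ℚ⟦X⟧) ^ (t (n+1) (m+1)) * X^(2*n+1-m) = X ^ (t (n+1) m) * X^(n+1) := by
      rw [← pow_add, ← pow_add, t_exp1 n m hm']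
    have hc : (X : ℚ⟦X⟧) ^ (t (n+1) (m+1)) * X^(2*n-m) = X ^ (t (n+1) m) * X^n := by
      rw [← pow_add, ← pow_add, t_exp2 n m hm']
    have hd : (X : ℚ⟦X⟧) ^ (t (n+1) (m+1+1)) * X^(2*n+1-(m+1)) * X^(2*n-m)
        = X ^ (t (n+1) m) * X^(2*n+1) := by
      rw [show 2*n+1-(m+1) = 2*n-m from by omega, show m+1+1 = m+2 from rfl,
        ← pow_add, ← pow_add, ← pow_add]
      congr 1
      have := t_exp3 n m hm'
      omega
    have hxx : (X : ℚ⟦X⟧) ^ n * X^(n+1) = X^(2*n+1) := by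
      rw [← pow_add]; congr 1; omega
    linear_combination binq (2*n) m * (hb + hc + hd) + X ^ (t (n+1) m) * binq (2*n) m * hxx
  rw [Finset.sum_congr rfl h2, ← Finset.mul_sum]
  congr 1
  -- reflection
  rw [← Finset.sum_range_reflect]
  unfold G
  apply Finset.sum_congr rfl
  intro m hm
  rw [Finset.mem_range] at hm
  rw [show 2*n+1-1-m = 2*n-m from by omega, t_reflect n m (by omega),
    binq_symm (show (2*n-m) + m = 2*n from by omega)]

lemma G_eq (n : ℕ) : G n = ∏ i ∈ Finset.range n, ((1 + X^i) * (1 + X^(i+1))) := by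
  induction n with
  | zero =>
    unfold G
    simp [t_zero_zero, binq_zero]
  | succ n ih =>
    rw [G_succ, ih, Finset.prod_range_succ]
    ring


lemma G_def (n : ℕ) : G n = ∑ m ∈ Finset.range (2*n+1), X ^ (t n m) * binq (2*n) m := rfl

section Cong
variable (k : ℕ)

noncomputable def Ik (k : ℕ) : Ideal ℚ⟦X⟧ := Ideal.span {X ^ (k+1)}

noncomputable def pk (k : ℕ) : ℚ⟦X⟧ →+* (ℚ⟦X⟧ ⧸ Ik k) := Ideal.Quotient.mk (Ik k)

lemma pk_eq_of_dvd {a b : ℚ⟦X⟧} (h : (X:ℚ⟦X⟧)^(k+1) ∣ a - b) : pk k a = pk k b := by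
  rw [pk, Ideal.Quotient.mk_eq_mk_iff_sub_mem, Ik, Ideal.mem_span_singleton]
  exact h

lemma coeff_eq_of_pk_eq {a b : ℚ⟦X⟧} (h : pk k a = pk k b) :
    coeff k a = coeff k b := by
  rw [pk, Ideal.Quotient.mk_eq_mk_iff_sub_mem, Ik, Ideal.mem_span_singleton] at h
  have h2 := (PowerSeries.X_pow_dvd_iff.mp h) k (by omega)
  rw [map_sub, sub_eq_zero] at h2
  exact h2

lemma pk_X_pow_eq_zero {i : ℕ} (h : k + 1 ≤ i) : pk k ((X:ℚ⟦X⟧)^i) = 0 := by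
  rw [pk, Ideal.Quotient.eq_zero_iff_mem, Ik, Ideal.mem_span_singleton]
  exact pow_dvd_pow _ h

lemma qp_dvd_sub {a b : ℕ} (hab : a ≤ b) (ha : k ≤ a) :
    (X:ℚ⟦X⟧)^(k+1) ∣ qp b - qp a := by
  induction b, hab using Nat.le_induction with
  | base => simp
  | succ b hb ih =>
    have h1 : qp (b+1) - qp a = (qp b - qp a) - qp b * X^(b+1) := by
      rw [qp_succ]; ring
    rw [h1]
    exact dvd_sub ih ((pow_dvd_pow (X:ℚ⟦X⟧) (by omega)).mul_left _)

lemma pk_qp_eq {a b : ℕ} (ha : k ≤ a) (hb : k ≤ b) : pk k (qp a) = pk k (qp b) := by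
  rcases le_total a b with h | h
  · exact (pk_eq_of_dvd k (qp_dvd_sub k h ha)).symm
  · exact pk_eq_of_dvd k (qp_dvd_sub k h hb)

lemma psiFactor_dvd_sub {i : ℕ} (h : k + 1 ≤ i) :
    (X:ℚ⟦X⟧)^(k+1) ∣ psiFactor i - 1 := by
  obtain ⟨j, rfl⟩ : ∃ j, i = j + 1 := ⟨i - 1, by omega⟩
  have hdx : (X:ℚ⟦X⟧)^(k+1) ∣ X^(j+1) := pow_dvd_pow _ h
  unfold psiFactor
  by_cases hp : (j+1) % 2 = 1
  · rw [if_pos hp]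
    have hu : (1 - (X:ℚ⟦X⟧)^(j+1)) * (1 - (X:ℚ⟦X⟧)^(j+1))⁻¹ = 1 :=
      PowerSeries.mul_inv_cancel _ (by rw [cc_one_sub_X_pow]; exact one_ne_zero)
    have he : (1 - (X:ℚ⟦X⟧)^(j+1))⁻¹ - 1 = X^(j+1) * (1 - (X:ℚ⟦X⟧)^(j+1))⁻¹ := by
      linear_combination hu
    rw [he]
    exact hdx.mul_right _
  · rw [if_neg hp]
    have : (1:ℚ⟦X⟧) - X^(j+1) - 1 = -(X^(j+1)) := by ring
    rw [this]
    exact hdx.neg_right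

lemma pk_psiFactor {i : ℕ} (h : k + 1 ≤ i) : pk k (psiFactor i) = 1 := by
  have := pk_eq_of_dvd k (psiFactor_dvd_sub k h)
  rwa [map_one] at this

lemma pk_prod_psiFactor {s : Finset ℕ} (hs : Finset.range k ⊆ s) :
    pk k (∏ i ∈ s, psiFactor (i+1)) = pk k (∏ i ∈ Finset.range k, psiFactor (i+1)) := by
  rw [map_prod, map_prod]
  exact (Finset.prod_subset hs (fun i _ hi => by
    rw [Finset.mem_range, not_lt] at hi
    exact pk_psiFactor k (by omega))).symm

end Cong

lemma t_large (k m : ℕ) (hm : m ≤ 2*(2*k+2)) (h : ¬(k+1 ≤ m ∧ k+1 ≤ 2*(2*k+2)-m)) :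
    k + 1 ≤ t (2*k+2) m := by
  push_neg at h
  rcases le_or_gt (k+1) m with h1 | h1
  · have h2 := h h1
    rw [t_le _ _ (by omega)]
    have := le_tri (m - (2*k+2))
    omega
  · rw [t_gt _ _ (by omega)]
    have := le_tri (2*k+2 - m - 1)
    omega

/-- The main coefficient identity. -/
lemma main_coeff (k : ℕ) :
    coeff k psi = coeff k (∏ i ∈ Finset.range k, psiFactor (i+1)) := by
  set n : ℕ := 2*k+2 with hn
  set Pk : ℚ⟦X⟧ := ∏ i ∈ Finset.range k, psiFactor (i+1) with hPk
  set P2n : ℚ⟦X⟧ := ∏ i ∈ Finset.range (2*n), psiFactor (i+1) with hP2n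
  set Q : ℚ⟦X⟧ := qp n ^ 2 * (qp (2*n))⁻¹ with hQ
  -- step (a): pk of Q * G n is pk of the theta sum
  have ha : pk k (Q * G n) = pk k (∑ m ∈ Finset.range (2*n+1), X ^ (t n m)) := by
    rw [G_def, Finset.mul_sum, map_sum, map_sum]
    apply Finset.sum_congr rfl
    intro m hm
    rw [Finset.mem_range] at hm
    by_cases hc : k+1 ≤ m ∧ k+1 ≤ 2*n - m
    · -- cofactor is ≡ 1
      have hbm := binq_mul (2*n) m (2*n-m) (by omega)
      have claim : pk k (Q * binq (2*n) m) = 1 := by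
        have hu : IsUnit (pk k (qp m * qp (2*n-m) * qp (2*n))) :=
          (((isUnit_qp m).mul (isUnit_qp (2*n-m))).mul (isUnit_qp (2*n))).map _
        apply hu.mul_left_cancel
        have hR : (qp m * qp (2*n-m) * qp (2*n)) * (Q * binq (2*n) m)
            = qp (2*n) * qp n ^ 2 := by
          have hUV := qp_mul_inv (2*n)
          rw [hQ]
          linear_combination (qp n^2 * qp (2*n) * (qp (2*n))⁻¹) * hbm
            + (qp n^2 * qp (2*n)) * hUV
        rw [mul_one, ← map_mul, hR]
        have e1 : pk k (qp m) = pk k (qp n) := pk_qp_eq k (by omega) (by omega)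
        have e2 : pk k (qp (2*n-m)) = pk k (qp n) := pk_qp_eq k (by omega) (by omega)
        rw [map_mul, map_mul, map_mul, map_pow, e1, e2]
        ring
      have hre : Q * (X ^ (t n m) * binq (2*n) m) = X ^ (t n m) * (Q * binq (2*n) m) := by
        ring
      rw [hre, map_mul, claim, mul_one]
    · -- exponent is large
      have hconst : k + 1 ≤ t n m := t_large k m (by omega) hc
      have hre : Q * (X ^ (t n m) * binq (2*n) m) = X ^ (t n m) * (Q * binq (2*n) m) := by
        ring
      rw [hre, map_mul, pk_X_pow_eq_zero k hconst, zero_mul]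
  -- step (b): exact product identities
  have hE1 : P2n * qp (2*n) = (∏ i ∈ Finset.range n, (1 - X^(2*(i+1))))^2 := by
    rw [hP2n]
    clear ha hPk hQ hP2n
    induction n with
    | zero => simp [qp_zero]
    | succ n ih =>
      have hpf2 : psiFactor (2*n+1) = (1 - (X:ℚ⟦X⟧)^(2*n+1))⁻¹ := by
        unfold psiFactor
        rw [if_pos (by omega)]
      have hpf1 : psiFactor (2*n+1+1) = 1 - X^(2*n+2) := by
        unfold psiFactor
        rw [if_neg (by omega), show 2*n+1+1 = 2*n+2 from rfl]
      have hcan : (1 - (X:ℚ⟦X⟧)^(2*n+1)) * (1 - (X:ℚ⟦X⟧)^(2*n+1))⁻¹ = 1 :=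
        PowerSeries.mul_inv_cancel _ (by
          rw [show 2*n+1 = (2*n)+1 from rfl, cc_one_sub_X_pow]; exact one_ne_zero)
      have hL : ∏ i ∈ Finset.range (2*(n+1)), psiFactor (i+1)
          = (∏ i ∈ Finset.range (2*n), psiFactor (i+1))
            * ((1 - (X:ℚ⟦X⟧)^(2*n+1))⁻¹ * (1 - X^(2*n+2))) := by
        rw [show 2*(n+1) = 2*n+1+1 from by omega, Finset.prod_range_succ,
          Finset.prod_range_succ, hpf1, hpf2]
        ring
      have hq : qp (2*(n+1)) = qp (2*n) * ((1 - X^(2*n+1)) * (1 - X^(2*n+2))) := by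
        rw [show 2*(n+1) = 2*n+1+1 from by omega, qp_succ, qp_succ,
          show 2*n+1+1 = 2*n+2 from rfl]
        ring
      have hA : ∏ i ∈ Finset.range (n+1), (1 - (X:ℚ⟦X⟧)^(2*(i+1)))
          = (∏ i ∈ Finset.range n, (1-X^(2*(i+1)))) * (1 - X^(2*n+2)) := by
        rw [Finset.prod_range_succ, show 2*(n+1) = 2*n+2 from by omega]
      rw [hL, hq, hA]
      set PP := ∏ i ∈ Finset.range (2*n), psiFactor (i+1)
      set AA := ∏ i ∈ Finset.range n, (1 - (X:ℚ⟦X⟧)^(2*(i+1)))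
      set z := (X:ℚ⟦X⟧)^(2*n+2)
      linear_combination (1-z)^2 * ih + ((1-z)^2 * PP * qp (2*n)) * hcan
  have hE2 : ∏ i ∈ Finset.range n, (1 - (X:ℚ⟦X⟧)^(2*(i+1)))
      = qp n * (∏ i ∈ Finset.range n, (1 + X^(i+1))) := by
    rw [qp_def, ← Finset.prod_mul_distrib]
    apply Finset.prod_congr rfl
    intro i _
    have : (X:ℚ⟦X⟧)^(2*(i+1)) = X^(i+1) * X^(i+1) := by
      rw [← pow_add]; congr 1; omega
    rw [this]; ring
  have hE3 : (∏ i ∈ Finset.range n, (1 + (X:ℚ⟦X⟧)^i)) * (1 + X^n)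
      = 2 * ∏ i ∈ Finset.range n, (1 + X^(i+1)) := by
    have h1 := Finset.prod_range_succ (fun i => (1:ℚ⟦X⟧) + X^i) n
    have h2 := Finset.prod_range_succ' (fun i => (1:ℚ⟦X⟧) + X^i) n
    simp only [pow_zero] at h2
    rw [← h1, h2]
    ring
  have hb : pk k (Q * G n) = pk k (2 * Pk) := by
    have hkey : Q * G n * (1 + X^n) = 2 * P2n := by
      rw [G_eq, Finset.prod_mul_distrib, hQ]
      set B := ∏ i ∈ Finset.range n, (1 + (X:ℚ⟦X⟧)^i)
      set e := ∏ i ∈ Finset.range n, (1 + (X:ℚ⟦X⟧)^(i+1))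
      set A := ∏ i ∈ Finset.range n, (1 - (X:ℚ⟦X⟧)^(2*(i+1)))
      set u := qp n
      set U := qp (2*n)
      set V := (qp (2*n))⁻¹
      have hUV : U * V = 1 := qp_mul_inv (2*n)
      -- goal : u^2 * V * (B * e) * (1 + X^n) = 2 * P2n
      linear_combination (u^2*V*e) * hE3 - 2*V*(A + u*e) * hE2 - 2*V*hE1
        + (2*P2n) * hUV
    have h1n : pk k ((1:ℚ⟦X⟧) + X^n) = 1 := by
      have : (X:ℚ⟦X⟧)^(k+1) ∣ (1 + X^n) - 1 := by
        have : (1:ℚ⟦X⟧) + X^n - 1 = X^n := by ring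
        rw [this]
        exact pow_dvd_pow _ (by omega)
      have h := pk_eq_of_dvd k this
      rwa [map_one] at h
    have := congrArg (pk k) hkey
    rw [map_mul, h1n, mul_one] at this
    rw [this, map_mul, map_mul]
    congr 1
    exact pk_prod_psiFactor k (by
      intro x hx
      rw [Finset.mem_range] at hx ⊢
      omega)
  -- step (c): counting
  have hcnt : coeff k (∑ m ∈ Finset.range (2*n+1), (X:ℚ⟦X⟧) ^ (t n m))
      = 2 * ((Nat.card {m : ℕ // m * (m + 1) / 2 = k} : ℚ)) := by
    rw [map_sum]
    simp only [coeff_X_pow]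
    rw [Finset.sum_boole]
    by_cases hex : ∃ j, tri j = k
    · obtain ⟨j, hj⟩ := hex
      have hjk : j ≤ k := hj ▸ le_tri j
      have hfil : (Finset.range (2*n+1)).filter (fun m => k = t n m)
          = {n-1-j, n+j} := by
        ext m
        simp only [Finset.mem_filter, Finset.mem_range, Finset.mem_insert,
          Finset.mem_singleton]
        constructor
        · rintro ⟨hm, hk⟩
          rcases le_or_gt n m with h1 | h1
          · right
            rw [t_le _ _ h1] at hk
            have := tri_strictMono.injective (hj.trans hk)
            omega
          · left
            rw [t_gt _ _ h1] at hk
            have := tri_strictMono.injective (hj.trans hk)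
            omega
        · rintro (rfl | rfl)
          · refine ⟨by omega, ?_⟩
            rw [t_gt _ _ (by omega), show n - (n-1-j) - 1 = j from by omega, hj]
          · refine ⟨by omega, ?_⟩
            rw [t_le _ _ (by omega), show n + j - n = j from by omega, hj]
      rw [hfil]
      have hne : n-1-j ≠ n+j := by omega
      rw [Finset.card_insert_of_notMem (by simp only [Finset.mem_singleton]; omega),
        Finset.card_singleton]
      have hone : Nat.card {m : ℕ // m * (m + 1) / 2 = k} = 1 := by
        haveI : Unique {m : ℕ // m * (m + 1) / 2 = k} := by
          refine ⟨⟨⟨j, by rw [tri_eq]; exact hj⟩⟩, ?_⟩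
          rintro ⟨x, hx⟩
          have : tri x = k := by rw [← tri_eq]; exact hx
          have := tri_strictMono.injective (this.trans hj.symm)
          simp [this]
        exact Nat.card_unique
      rw [hone]
      norm_num
    · push_neg at hex
      have hfil : (Finset.range (2*n+1)).filter (fun m => k = t n m) = ∅ := by
        ext m
        simp only [Finset.mem_filter, Finset.mem_range, Finset.notMem_empty,
          iff_false, not_and]
        intro hm hk
        rcases le_or_gt n m with h1 | h1
        · exact hex (m - n) (by rw [t_le _ _ h1] at hk; omega)
        · exact hex (n - m - 1) (by rw [t_gt _ _ h1] at hk; omega)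
      rw [hfil]
      haveI : IsEmpty {m : ℕ // m * (m + 1) / 2 = k} := by
        refine ⟨?_⟩
        rintro ⟨x, hx⟩
        exact hex x (by rw [← tri_eq]; exact hx)
      rw [Nat.card_of_isEmpty]
      norm_num
  -- combine
  have hcomb := coeff_eq_of_pk_eq k (ha.symm.trans hb)
  rw [hcnt] at hcomb
  have hpsi : coeff k psi = (Nat.card {m : ℕ // m * (m + 1) / 2 = k} : ℚ) := by
    rw [psi, coeff_mk]
  rw [hpsi]
  have h2 : coeff k (2 * Pk) = 2 * coeff k Pk := by
    rw [show (2:ℚ⟦X⟧) = C (2:ℚ) from (map_ofNat (C (R := ℚ)) 2).symm, coeff_C_mul]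
  rw [h2] at hcomb
  have := mul_left_cancel₀ (two_ne_zero (α := ℚ)) hcomb
  exact this

lemma coeff_prod_eventually (k : ℕ) {s : Finset ℕ} (hs : Finset.range k ⊆ s) :
    coeff k (∏ i ∈ s, psiFactor (i+1)) = coeff k psi := by
  rw [main_coeff k]
  exact coeff_eq_of_pk_eq k (pk_prod_psiFactor k hs)

instance : T2Space ℚ⟦X⟧ := inferInstanceAs (T2Space ((Unit →₀ ℕ) → ℚ))

lemma apply_eq_coeff (g : ℚ⟦X⟧) (d : Unit →₀ ℕ) :
    (g : (Unit →₀ ℕ) → ℚ) d = coeff (d ()) g := by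
  have hδ : d = Finsupp.single default (d default) := Finsupp.unique_single d
  conv_lhs => rw [hδ]
  rfl

theorem hasProd_psi : HasProd (fun i : ℕ => psiFactor (i+1)) psi := by
  have key : ∀ d : Unit →₀ ℕ, Filter.Tendsto
      (fun s : Finset ℕ => ((∏ i ∈ s, psiFactor (i+1) : ℚ⟦X⟧)) d)
      Filter.atTop (nhds ((psi : ℚ⟦X⟧) d)) := by
    intro d
    have hev : (fun s : Finset ℕ => ((∏ i ∈ s, psiFactor (i+1) : ℚ⟦X⟧)) d)
        =ᶠ[Filter.atTop] (fun _ => (psi : ℚ⟦X⟧) d) := by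
      filter_upwards [Filter.eventually_ge_atTop (Finset.range (d ()))] with s hs
      rw [apply_eq_coeff (∏ i ∈ s, psiFactor (i+1)) d, apply_eq_coeff psi d]
      exact coeff_prod_eventually (d ()) hs
    exact (Filter.Tendsto.congr' hev.symm tendsto_const_nhds)
  exact tendsto_pi_nhds.mpr key


end GaussAux

theorem stmt_16 : psi = ∏' n : ℕ, psiFactor (n + 1) := by
  exact (GaussAux.hasProd_psi.tprod_eq).symm
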